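/- Let g₁,…,g_m and Δg₁,…,Δg_m be N×N complex Hermitian matrices with g̃ⱼ := gⱼ + Δgⱼ, and let α, Δα ∈ ℝ^m with α̃ := α + Δα. Set ε_g := maxⱼ ‖Δgⱼ‖ (spectral norm), ε_α := ‖Δα‖_∞, κ := κ(g), γ := γ(g|α), γ̃ := γ(g̃|α̃). Assume κ > 0 and ε_g < κ. Then γ̃ ≤ (1 + ε_g/(κ − ε_g)) · γ + ε_α/(2(κ − ε_g)). -/

import Mathlib

set_option synthInstance.maxHeartbeats 1000000
set_option maxHeartbeats 1000000

open scoped BigOperators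

/-- The spectral norm (ℓ²-operator norm) of a complex matrix. -/
noncomputable def specNorm {n : Type*} [Fintype n] [DecidableEq n]
    (A : Matrix n n ℂ) : ℝ :=
  ‖Matrix.toEuclideanCLM (𝕜 := ℂ) A‖

/-- The conditioning constant `κ(g)`: the infimum over real vectors `y` with `‖y‖₁ = 1` and
real `μ` of the spectral norm `‖Σⱼ yⱼ gⱼ + μ I‖`. -/
noncomputable def kappa {N m : ℕ} (g : Fin m → Matrix (Fin N) (Fin N) ℂ) : ℝ :=
  sInf {c : ℝ | ∃ (y : Fin m → ℝ) (μ : ℝ), (∑ j, |y j|) = 1 ∧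
    c = specNorm (∑ j, y j • g j + μ • (1 : Matrix (Fin N) (Fin N) ℂ))}

/-- The dual value `γ(g|α)`: the supremum of `Σⱼ αⱼ yⱼ` over all `y` for which there exists
`μ` with `‖Σⱼ yⱼ gⱼ + μ I‖ ≤ 1/2` in spectral norm. -/
noncomputable def gammaVal {N m : ℕ} (g : Fin m → Matrix (Fin N) (Fin N) ℂ)
    (α : Fin m → ℝ) : ℝ :=
  sSup {c : ℝ | ∃ (y : Fin m → ℝ) (μ : ℝ),
    specNorm (∑ j, y j • g j + μ • (1 : Matrix (Fin N) (Fin N) ℂ)) ≤ 1 / 2 ∧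
    c = ∑ j, α j * y j}

section Aux

variable {n : Type*} [Fintype n] [DecidableEq n]

lemma specNorm_nonneg (A : Matrix n n ℂ) : 0 ≤ specNorm A := norm_nonneg _

lemma specNorm_zero : specNorm (0 : Matrix n n ℂ) = 0 := by
  unfold specNorm; simp

lemma specNorm_add_le (A B : Matrix n n ℂ) : specNorm (A + B) ≤ specNorm A + specNorm B := by
  unfold specNorm; rw [map_add]; exact norm_add_le _ _

lemma specNorm_smul (r : ℝ) (A : Matrix n n ℂ) : specNorm (r • A) = |r| * specNorm A := by
  unfold specNorm
  rw [show r • A = (r : ℂ) • A from (algebraMap_smul ℂ r A).symm, map_smul]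
  rw [norm_smul (r : ℂ) (Matrix.toEuclideanCLM (𝕜 := ℂ) A)]
  simp

lemma specNorm_sum_le {ι : Type*} (s : Finset ι) (f : ι → Matrix n n ℂ) :
    specNorm (∑ j ∈ s, f j) ≤ ∑ j ∈ s, specNorm (f j) := by
  unfold specNorm; rw [map_sum]; exact norm_sum_le _ _

end Aux

lemma kappa_mul_le {N m : ℕ} (g : Fin m → Matrix (Fin N) (Fin N) ℂ)
    (y : Fin m → ℝ) (μ : ℝ) :
    kappa g * (∑ j, |y j|) ≤
      specNorm (∑ j, y j • g j + μ • (1 : Matrix (Fin N) (Fin N) ℂ)) := by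
  set s := ∑ j, |y j| with hs
  have hs0 : 0 ≤ s := Finset.sum_nonneg fun j _ => abs_nonneg _
  rcases eq_or_lt_of_le hs0 with h | h
  · rw [← h, mul_zero]; exact specNorm_nonneg _
  · have hbdd : BddBelow {c : ℝ | ∃ (y : Fin m → ℝ) (μ : ℝ), (∑ j, |y j|) = 1 ∧
        c = specNorm (∑ j, y j • g j + μ • (1 : Matrix (Fin N) (Fin N) ℂ))} := by
      refine ⟨0, fun c hc => ?_⟩
      obtain ⟨y', μ', _, rfl⟩ := hc
      exact specNorm_nonneg _
    have hmem : specNorm (∑ j, (s⁻¹ * y j) • g j + (s⁻¹ * μ) • (1 : Matrix (Fin N) (Fin N) ℂ))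
        ∈ {c : ℝ | ∃ (y : Fin m → ℝ) (μ : ℝ), (∑ j, |y j|) = 1 ∧
        c = specNorm (∑ j, y j • g j + μ • (1 : Matrix (Fin N) (Fin N) ℂ))} := by
      refine ⟨fun j => s⁻¹ * y j, s⁻¹ * μ, ?_, rfl⟩
      simp only [abs_mul, abs_of_pos (inv_pos.2 h), ← Finset.mul_sum, ← hs]
      exact inv_mul_cancel₀ h.ne'
    have hk := csInf_le hbdd hmem
    have heq : ∑ j, (s⁻¹ * y j) • g j + (s⁻¹ * μ) • (1 : Matrix (Fin N) (Fin N) ℂ)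
        = s⁻¹ • (∑ j, y j • g j + μ • (1 : Matrix (Fin N) (Fin N) ℂ)) := by
      rw [smul_add, Finset.smul_sum, smul_smul]
      congr 1
      exact Finset.sum_congr rfl fun j _ => (smul_smul _ _ _).symm
    rw [heq, specNorm_smul, abs_of_pos (inv_pos.2 h)] at hk
    unfold kappa
    have := mul_le_mul_of_nonneg_right hk (le_of_lt h)
    rwa [mul_comm s⁻¹, mul_assoc, inv_mul_cancel₀ h.ne', mul_one] at this

lemma gammaVal_bddAbove {N m : ℕ} (g : Fin m → Matrix (Fin N) (Fin N) ℂ)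
    (α : Fin m → ℝ) (hκ : 0 < kappa g) :
    BddAbove {c : ℝ | ∃ (y : Fin m → ℝ) (μ : ℝ),
      specNorm (∑ j, y j • g j + μ • (1 : Matrix (Fin N) (Fin N) ℂ)) ≤ 1 / 2 ∧
      c = ∑ j, α j * y j} := by
  refine ⟨(∑ j, |α j|) * (1 / (2 * kappa g)), fun c hc => ?_⟩
  obtain ⟨y, μ, hfeas, rfl⟩ := hc
  have hks : kappa g * (∑ j, |y j|) ≤ 1 / 2 := (kappa_mul_le g y μ).trans hfeas
  have h2 : (∑ j, |y j|) ≤ 1 / (2 * kappa g) := by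
    rw [le_div_iff₀ (by positivity)]; nlinarith
  calc (∑ j, α j * y j) ≤ ∑ j, |α j| * (1 / (2 * kappa g)) := by
        refine Finset.sum_le_sum fun j _ => ?_
        calc α j * y j ≤ |α j * y j| := le_abs_self _
          _ = |α j| * |y j| := abs_mul _ _
          _ ≤ |α j| * (1 / (2 * kappa g)) :=
            mul_le_mul_of_nonneg_left
              ((Finset.single_le_sum (fun i _ => abs_nonneg (y i))
                (Finset.mem_univ j)).trans h2) (abs_nonneg _)
    _ = (∑ j, |α j|) * (1 / (2 * kappa g)) := (Finset.sum_mul _ _ _).symm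

/-- Upper perturbation bound for γ: `γ̃ ≤ (1 + ε_g/(κ − ε_g)) γ + ε_α/(2(κ − ε_g))` when `ε_g < κ`. -/
theorem gamma_perturb_upper {N m : ℕ} (hm : 0 < m)
    (g Δg : Fin m → Matrix (Fin N) (Fin N) ℂ)
    (hg : ∀ j, (g j).IsHermitian) (hΔg : ∀ j, (Δg j).IsHermitian)
    (α Δα : Fin m → ℝ) (εg εα : ℝ)
    (hεg : εg = Finset.univ.sup' (Finset.univ_nonempty_iff.mpr (Fin.pos_iff_nonempty.mp hm))
      (fun j => specNorm (Δg j)))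
    (hεα : εα = Finset.univ.sup' (Finset.univ_nonempty_iff.mpr (Fin.pos_iff_nonempty.mp hm))
      (fun j => |Δα j|))
    (hκ : 0 < kappa g) (hlt : εg < kappa g) :
    gammaVal (fun j => g j + Δg j) (fun j => α j + Δα j) ≤
      (1 + εg / (kappa g - εg)) * gammaVal g α + εα / (2 * (kappa g - εg)) := by
  have j0 : Fin m := ⟨0, hm⟩
  have hεg0 : 0 ≤ εg := by
    rw [hεg]
    exact le_trans (specNorm_nonneg (Δg j0)) (Finset.le_sup' (fun j => specNorm (Δg j)) (Finset.mem_univ j0))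
  have hεα0 : 0 ≤ εα := by
    rw [hεα]
    exact le_trans (abs_nonneg (Δα j0)) (Finset.le_sup' (fun j => |Δα j|) (Finset.mem_univ j0))
  have hεgj : ∀ j, specNorm (Δg j) ≤ εg := fun j => hεg ▸ Finset.le_sup' (fun j => specNorm (Δg j)) (Finset.mem_univ j)
  have hεαj : ∀ j, |Δα j| ≤ εα := fun j => hεα ▸ Finset.le_sup' (fun j => |Δα j|) (Finset.mem_univ j)
  set K := kappa g - εg with hK
  have hK0 : 0 < K := by simp [hK]; linarith
  have hγ0 : 0 ≤ gammaVal g α := by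
    refine le_csSup (gammaVal_bddAbove g α hκ) ⟨fun _ => 0, 0, ?_, by simp⟩
    simp [specNorm_zero]
  have hRHS0 : 0 ≤ (1 + εg / (kappa g - εg)) * gammaVal g α + εα / (2 * (kappa g - εg)) := by
    have h1 : 0 ≤ 1 + εg / (kappa g - εg) := by positivity
    have h2 : 0 ≤ εα / (2 * (kappa g - εg)) := by positivity
    exact add_nonneg (mul_nonneg h1 hγ0) h2
  refine Real.sSup_le ?_ hRHS0
  rintro x ⟨y, μ, hfeas, rfl⟩
  set s := ∑ j, |y j| with hs
  have hs0 : 0 ≤ s := Finset.sum_nonneg fun j _ => abs_nonneg _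
  -- Step A
  have hsplit : (∑ j, y j • g j + μ • (1 : Matrix (Fin N) (Fin N) ℂ))
      = (∑ j, y j • (g j + Δg j) + μ • (1 : Matrix (Fin N) (Fin N) ℂ))
        + (∑ j, (-(y j)) • Δg j) := by
    have hz : (∑ j, y j • g j + μ • (1 : Matrix (Fin N) (Fin N) ℂ))
        - (∑ j, y j • (g j + Δg j) + μ • (1 : Matrix (Fin N) (Fin N) ℂ))
        = ∑ j, (-(y j)) • Δg j := by
      rw [add_sub_add_right_eq_sub, ← Finset.sum_sub_distrib]
      refine Finset.sum_congr rfl fun j _ => ?_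
      rw [smul_add, neg_smul]
      abel
    rw [← hz]
    abel
  have hA : specNorm (∑ j, y j • g j + μ • (1 : Matrix (Fin N) (Fin N) ℂ)) ≤ 1 / 2 + εg * s := by
    rw [hsplit]
    refine (specNorm_add_le _ _).trans (add_le_add hfeas ?_)
    calc specNorm (∑ j, (-(y j)) • Δg j) ≤ ∑ j, specNorm ((-(y j)) • Δg j) :=
          specNorm_sum_le _ _
      _ = ∑ j, |y j| * specNorm (Δg j) := by
          refine Finset.sum_congr rfl fun j _ => ?_
          rw [specNorm_smul, abs_neg]
      _ ≤ ∑ j, |y j| * εg :=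
          Finset.sum_le_sum fun j _ =>
            mul_le_mul_of_nonneg_left (hεgj j) (abs_nonneg _)
      _ = εg * s := by rw [← Finset.sum_mul, mul_comm]
  -- Step B
  have hB : kappa g * s ≤ 1 / 2 + εg * s := (kappa_mul_le g y μ).trans hA
  set u := 1 / (2 * K) with hu
  have hu0 : 0 < u := by positivity
  have hsu : s ≤ u := by
    rw [hu, le_div_iff₀ (by positivity)]
    nlinarith
  -- Step C : scaling
  set d := 1 / 2 + εg * s with hd
  have hd0 : 0 < d := by positivity
  set t := (1 / 2) / d with ht
  have ht0 : 0 < t := by positivity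
  have heqt : ∑ j, (t * y j) • g j + (t * μ) • (1 : Matrix (Fin N) (Fin N) ℂ)
      = t • (∑ j, y j • g j + μ • (1 : Matrix (Fin N) (Fin N) ℂ)) := by
    rw [smul_add, Finset.smul_sum, smul_smul]
    congr 1
    exact Finset.sum_congr rfl fun j _ => (smul_smul _ _ _).symm
  have hfeas2 : specNorm (∑ j, (t * y j) • g j + (t * μ) • (1 : Matrix (Fin N) (Fin N) ℂ))
      ≤ 1 / 2 := by
    rw [heqt, specNorm_smul, abs_of_pos ht0]
    calc t * specNorm (∑ j, y j • g j + μ • (1 : Matrix (Fin N) (Fin N) ℂ))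
        ≤ t * d := mul_le_mul_of_nonneg_left hA (le_of_lt ht0)
      _ = 1 / 2 := by rw [ht]; field_simp
  have hc : (∑ j, α j * (t * y j)) ≤ gammaVal g α :=
    le_csSup (gammaVal_bddAbove g α hκ) ⟨fun j => t * y j, t * μ, hfeas2, rfl⟩
  have hty : (∑ j, α j * (t * y j)) = t * ∑ j, α j * y j := by
    rw [Finset.mul_sum]
    exact Finset.sum_congr rfl fun j _ => by ring
  rw [hty] at hc
  have htc : t * (1 + 2 * εg * s) = 1 := by
    rw [ht, hd]; field_simp
  have hαy : (∑ j, α j * y j) ≤ gammaVal g α * (1 + 2 * εg * s) := by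
    have hc2 : 0 ≤ 1 + 2 * εg * s := by positivity
    calc (∑ j, α j * y j) = (1 + 2 * εg * s) * (t * ∑ j, α j * y j) := by
          rw [← mul_assoc, mul_comm (1 + 2 * εg * s) t, htc, one_mul]
      _ ≤ (1 + 2 * εg * s) * gammaVal g α := mul_le_mul_of_nonneg_left hc hc2
      _ = gammaVal g α * (1 + 2 * εg * s) := mul_comm _ _
  -- Step D
  have hxsplit : (∑ j, (α j + Δα j) * y j) = (∑ j, α j * y j) + ∑ j, Δα j * y j := by
    rw [← Finset.sum_add_distrib]
    exact Finset.sum_congr rfl fun j _ => by ring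
  have hΔ : (∑ j, Δα j * y j) ≤ εα * s := by
    calc (∑ j, Δα j * y j) ≤ ∑ j, εα * |y j| := by
          refine Finset.sum_le_sum fun j _ => ?_
          calc Δα j * y j ≤ |Δα j * y j| := le_abs_self _
            _ = |Δα j| * |y j| := abs_mul _ _
            _ ≤ εα * |y j| := mul_le_mul_of_nonneg_right (hεαj j) (abs_nonneg _)
      _ = εα * s := by rw [← Finset.mul_sum]
  -- combine
  have hRHSeq : (1 + εg / (kappa g - εg)) * gammaVal g α + εα / (2 * (kappa g - εg))
      = gammaVal g α * (1 + 2 * εg * u) + εα * u := by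
    rw [hu, ← hK]; ring
  rw [hxsplit, hRHSeq]
  have h1 : gammaVal g α * (1 + 2 * εg * s) ≤ gammaVal g α * (1 + 2 * εg * u) := by
    have := mul_nonneg (mul_nonneg hγ0 hεg0) (sub_nonneg.2 hsu)
    nlinarith
  have h2 : εα * s ≤ εα * u := mul_le_mul_of_nonneg_left hsu hεα0
  linarith [hαy.trans h1, hΔ.trans h2]
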